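/- arXiv:1303.5183 — 5 statements merged into one kernel-verified Lean document; each statement's English description precedes it below -/
import Mathlib

section
/- Let G be a second countable locally compact group having Property (T_{ℓ_p}) for some real number p with 1 < p < ∞. Then G is compactly generated, i.e., there is a compact subset of G that generates G as a group. -/
/-!
If `G` is not compactly generated, it is the increasing union of compactly generated open
subgroups `H n`, each of countably infinite index. The permutation representation of `G` on
`ℓ_p(Σ n, G ⧸ H n) ≅ ℓ_p` has the Dirac masses at the cosets `H n` as unit vectors fixed by
`H n`, hence almost invariant. They annihilate every invariant vector of `ℓ_q`: such a vector is
constant on each infinite orbit `G ⧸ H n`, and `q < ∞` forces that constant to be `0`.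
-/

open scoped ENNReal Pointwise
open Filter MeasureTheory

noncomputable section

/-- The conjugate exponent `q` of `p`, i.e. the solution of `1/p + 1/q = 1` in `ℝ≥0∞`. -/
def conjExp (p : ℝ≥0∞) : ℝ≥0∞ := (1 - p⁻¹)⁻¹

/-- The canonical pairing between `ℓ_q` and `ℓ_p`: `⟨φ, f⟩ = ∑ₓ φ(x) f(x)`. -/
def dualPair {X : Type*} (φ f : X → ℂ) : ℂ := ∑' x, φ x * f x

/-- An orthogonal representation of a topological group `G` on `ℓ_p = ℓ_p(ℕ, ℂ)`:
a homomorphism into the group of surjective linear isometries of `ℓ_p` which is strongly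
continuous. -/
structure OrthRep (G : Type*) [Group G] [TopologicalSpace G] (p : ℝ≥0∞) [Fact (1 ≤ p)] where
  toFun : G →* (lp (fun _ : ℕ => ℂ) p ≃ₗᵢ[ℂ] lp (fun _ : ℕ => ℂ) p)
  continuous_apply : ∀ f : lp (fun _ : ℕ => ℂ) p, Continuous fun g => toFun g f

/-- `φ ∈ ℓ_q` is an invariant vector for the dual representation `π*` on `ℓ_q`
(where `π*(g) = (π(g⁻¹))ᵀ`), i.e. `⟨φ, π(g) f⟩ = ⟨φ, f⟩` for all `g` and `f`. -/
def OrthRep.DualInvariant {G : Type*} [Group G] [TopologicalSpace G] {p : ℝ≥0∞}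
    [Fact (1 ≤ p)] (π : OrthRep G p) (φ : ℕ → ℂ) : Prop :=
  Memℓp φ (conjExp p) ∧
    ∀ (g : G) (f : lp (fun _ : ℕ => ℂ) p), dualPair φ (π.toFun g f) = dualPair φ f

/-- `ℓ'_p(π)`: the annihilator in `ℓ_p` of the subspace of `π*(G)`-invariant vectors
of `ℓ_q`. -/
def OrthRep.ann {G : Type*} [Group G] [TopologicalSpace G] {p : ℝ≥0∞}
    [Fact (1 ≤ p)] (π : OrthRep G p) : Set (lp (fun _ : ℕ => ℂ) p) :=
  {f | ∀ φ : ℕ → ℂ, π.DualInvariant φ → dualPair φ f = 0}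

/-- There is a sequence of almost invariant unit vectors for `π` lying in the subset `S`:
unit vectors `f_n ∈ S` with `lim_n sup_{g ∈ Q} ‖π(g) f_n - f_n‖ = 0` for every compact
`Q ⊆ G`. -/
def OrthRep.HasAlmostInvariantSeq {G : Type*} [Group G] [TopologicalSpace G] {p : ℝ≥0∞}
    [Fact (1 ≤ p)] (π : OrthRep G p) (S : Set (lp (fun _ : ℕ => ℂ) p)) : Prop :=
  ∃ f : ℕ → lp (fun _ : ℕ => ℂ) p, (∀ n, f n ∈ S) ∧ (∀ n, ‖f n‖ = 1) ∧
    ∀ Q : Set G, IsCompact Q → ∀ ε : ℝ, 0 < ε →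
      ∃ N : ℕ, ∀ n ≥ N, ∀ g ∈ Q, ‖π.toFun g (f n) - f n‖ < ε

/-- Property `(T_{ℓ_p})` for a topological group `G`: no orthogonal representation of `G`
on `ℓ_p` admits a sequence of almost invariant unit vectors in `ℓ'_p(π)`. -/
def HasPropertyTlp (G : Type*) [Group G] [TopologicalSpace G] (p : ℝ) : Prop :=
  ∀ [Fact (1 ≤ ENNReal.ofReal p)],
    ∀ π : OrthRep G (ENNReal.ofReal p), ¬ π.HasAlmostInvariantSeq π.ann

open Topology

theorem Memℓp.comp_equiv {α β E : Type*} [NormedAddCommGroup E] {p : ℝ≥0∞} {f : α → E}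
    (hf : Memℓp f p) (e : β ≃ α) : Memℓp (f ∘ e) p := by
  rcases p.trichotomy with rfl | rfl | hp
  · exact memℓp_zero (hf.finite_dsupport.preimage e.injective.injOn)
  · exact memℓp_infty ((e.surjective.range_comp fun i => ‖f i‖) ▸ hf.bddAbove)
  · exact memℓp_gen (e.summable_iff.2 (hf.summable hp))

namespace lp

variable {α β E : Type*} [NormedAddCommGroup E] {p : ℝ≥0∞} [Fact (1 ≤ p)]

theorem norm_eq_of_coe_eq_comp {f : lp (fun _ : α => E) p} {g : lp (fun _ : β => E) p}
    (e : α ≃ β) (h : ⇑f = ⇑g ∘ e) : ‖f‖ = ‖g‖ := by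
  rcases p.dichotomy with rfl | hp
  · rw [lp.norm_eq_ciSup, lp.norm_eq_ciSup, h]
    exact e.iSup_comp (g := fun i => ‖g i‖)
  · have hp : 0 < p.toReal := zero_lt_one.trans_le hp
    rw [lp.norm_eq_tsum_rpow hp, lp.norm_eq_tsum_rpow hp, h]
    congr 1
    exact e.tsum_eq (fun i => ‖g i‖ ^ p.toReal)

end lp

namespace LinearIsometryEquiv

variable {α β 𝕜 E : Type*} [NormedRing 𝕜] [NormedAddCommGroup E] [Module 𝕜 E]
  [IsBoundedSMul 𝕜 E] (p : ℝ≥0∞) [Fact (1 ≤ p)]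

def lpCongrLeft (e : α ≃ β) : lp (fun _ : α => E) p ≃ₗᵢ[𝕜] lp (fun _ : β => E) p where
  toFun f := ⟨⇑f ∘ e.symm, (lp.memℓp f).comp_equiv e.symm⟩
  invFun g := ⟨⇑g ∘ e, (lp.memℓp g).comp_equiv e⟩
  left_inv f := by ext; simp
  right_inv g := by ext; simp
  map_add' _ _ := rfl
  map_smul' _ _ := rfl
  norm_map' f := lp.norm_eq_of_coe_eq_comp e.symm rfl

variable {p}

@[simp]
theorem lpCongrLeft_apply (e : α ≃ β) (f : lp (fun _ : α => E) p) (i : β) :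
    lpCongrLeft (𝕜 := 𝕜) p e f i = f (e.symm i) :=
  rfl

end LinearIsometryEquiv

theorem isClosed_setOf_continuous_of_isometry {X E F : Type*} [TopologicalSpace X]
    [PseudoMetricSpace E] [PseudoMetricSpace F] {T : X → E → F} (hT : ∀ x, Isometry (T x)) :
    IsClosed {f | Continuous fun x => T x f} := by
  refine isClosed_of_closure_subset fun f hf => ?_
  refine TendstoUniformly.continuous (F := fun f' x => T x f') (p := 𝓝 f) ?_
    (mem_closure_iff_frequently.1 hf)
  rw [Metric.tendstoUniformly_iff]
  intro ε hε
  filter_upwards [Metric.ball_mem_nhds f hε] with f' hf' x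
  rw [(hT x).dist_eq, dist_comm]
  exact hf'

namespace lp

variable {G α : Type*} (𝕜 : Type*) {E : Type*} [Group G] [NormedRing 𝕜] [NormedAddCommGroup E]
  [Module 𝕜 E] [IsBoundedSMul 𝕜 E] (p : ℝ≥0∞) [Fact (1 ≤ p)]

def permRep (a : G →* Equiv.Perm α) :
    G →* (lp (fun _ : α => E) p ≃ₗᵢ[𝕜] lp (fun _ : α => E) p) :=
  MonoidHom.mk' (fun g => LinearIsometryEquiv.lpCongrLeft p (a g)) fun g h => by
    ext; simp [LinearIsometryEquiv.coe_mul, Equiv.Perm.mul_def]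

variable {𝕜 p}

@[simp]
theorem permRep_apply (a : G →* Equiv.Perm α) (g : G) (f : lp (fun _ : α => E) p) (i : α) :
    permRep 𝕜 p a g f i = f ((a g).symm i) :=
  rfl

theorem permRep_single [DecidableEq α] (a : G →* Equiv.Perm α) (g : G) (i : α) (c : E) :
    permRep 𝕜 p a g (lp.single p i c) = lp.single p (a g i) c := by
  ext j
  simp only [permRep_apply, lp.single_apply, Pi.single_apply, Equiv.symm_apply_eq]

theorem continuous_permRep_apply [TopologicalSpace G] [TopologicalSpace α] [DiscreteTopology α]
    (hp : p ≠ ⊤) (a : G →* Equiv.Perm α) (ha : ∀ i, Continuous fun g => a g i)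
    (f : lp (fun _ : α => E) p) : Continuous fun g => permRep 𝕜 p a g f := by
  classical
  have hclosed : IsClosed {f : lp (fun _ : α => E) p | Continuous fun g => permRep 𝕜 p a g f} :=
    isClosed_setOf_continuous_of_isometry fun g => (permRep 𝕜 p a g).isometry
  refine hclosed.mem_of_tendsto (lp.hasSum_single hp f) (Eventually.of_forall fun s => ?_)
  simp only [Set.mem_ofPred_eq, map_sum, permRep_single]
  exact continuous_finsetSum s fun i _ =>
    (continuous_of_discreteTopology (f := fun j => lp.single p j (f i))).comp (ha i)

end lp

theorem Memℓp.eq_zero_of_forall_eq_of_infinite {α E : Type*} [NormedAddCommGroup E] {q : ℝ≥0∞}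
    (hq : 0 < q.toReal) {φ : α → E} (hφ : Memℓp φ q) {s : Set α} (hs : s.Infinite) {c : E}
    (hc : ∀ x ∈ s, φ x = c) : c = 0 := by
  by_contra h
  have hpos : 0 < ‖c‖ ^ q.toReal := Real.rpow_pos_of_pos (norm_pos_iff.2 h) _
  refine hs (((hφ.summable hq).tendsto_cofinite_zero.eventually_lt_const hpos).subset ?_)
  intro x hx
  simp [hc x hx]

theorem conjExp_toReal_pos {p : ℝ≥0∞} (hp : 1 < p) : 0 < (conjExp p).toReal := by
  refine ENNReal.toReal_pos ?_ ?_
  · simp [conjExp]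
  · simpa [conjExp, tsub_eq_zero_iff_le] using ENNReal.inv_lt_one.2 hp

theorem dualPair_single {α : Type*} [DecidableEq α] {p : ℝ≥0∞} (φ : α → ℂ) (i : α) :
    dualPair φ ⇑(lp.single p i (1 : ℂ)) = φ i := by
  rw [dualPair, tsum_eq_single i fun j hj => by simp [hj]]
  simp

namespace OrthRep

variable {G : Type*} [Group G] [TopologicalSpace G] {p : ℝ≥0∞} [Fact (1 ≤ p)]

def ofPerm (hp : p ≠ ⊤) (a : G →* Equiv.Perm ℕ) (ha : ∀ n, Continuous fun g => a g n) :
    OrthRep G p :=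
  ⟨lp.permRep ℂ p a, lp.continuous_permRep_apply hp a ha⟩

variable {hp : p ≠ ⊤} {a : G →* Equiv.Perm ℕ} {ha : ∀ n, Continuous fun g => a g n}

theorem DualInvariant.apply_perm {φ : ℕ → ℂ} (hφ : (ofPerm hp a ha).DualInvariant φ) (g : G)
    (n : ℕ) : φ (a g n) = φ n := by
  have := hφ.2 g (lp.single p n 1)
  rwa [ofPerm, lp.permRep_single, dualPair_single, dualPair_single] at this

theorem single_mem_ann_ofPerm (hp1 : 1 < p) {n : ℕ} (hn : (Set.range fun g => a g n).Infinite) :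
    lp.single p n 1 ∈ (ofPerm hp a ha).ann := by
  intro φ hφ
  rw [dualPair_single]
  refine hφ.1.eq_zero_of_forall_eq_of_infinite (conjExp_toReal_pos hp1) hn ?_
  rintro _ ⟨g, rfl⟩
  exact hφ.apply_perm g n

theorem hasAlmostInvariantSeq_ann_ofPerm (hp1 : 1 < p) (x : ℕ → ℕ)
    (hfix : ∀ Q : Set G, IsCompact Q → ∃ N, ∀ n ≥ N, ∀ g ∈ Q, a g (x n) = x n)
    (horbit : ∀ n, (Set.range fun g => a g (x n)).Infinite) :
    (ofPerm hp a ha).HasAlmostInvariantSeq (ofPerm hp a ha).ann := by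
  refine ⟨fun n => lp.single p (x n) 1, fun n => single_mem_ann_ofPerm hp1 (horbit n),
    fun n => by simp [lp.norm_single (zero_lt_one.trans_le Fact.out)], fun Q hQ ε hε => ?_⟩
  obtain ⟨N, hN⟩ := hfix Q hQ
  refine ⟨N, fun n hn g hg => ?_⟩
  simpa [ofPerm, lp.permRep_single, hN n hn g hg] using hε

end OrthRep

section CompactGeneration

variable {G : Type*} [Group G] [TopologicalSpace G]

theorem exists_isCompact_closure_eq_top_of_finite_quotient {K : Set G} (hK : IsCompact K)
    [Finite (G ⧸ Subgroup.closure K)] : ∃ L : Set G, IsCompact L ∧ Subgroup.closure L = ⊤ := by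
  set T := Set.range (Quotient.out : G ⧸ Subgroup.closure K → G)
  refine ⟨K ∪ T, hK.union (Set.finite_range _).isCompact, eq_top_iff.2 fun g _ => ?_⟩
  obtain ⟨h, hh⟩ := QuotientGroup.mk_out_eq_mul (Subgroup.closure K) g
  have hout : (g : G ⧸ Subgroup.closure K).out ∈ Subgroup.closure (K ∪ T) :=
    Subgroup.subset_closure (Or.inr ⟨_, rfl⟩)
  have hh' : (h : G) ∈ Subgroup.closure (K ∪ T) :=
    Subgroup.closure_mono Set.subset_union_left h.2
  simpa [hh] using mul_mem hout (inv_mem hh')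

theorem countable_quotient_of_isOpen [IsTopologicalGroup G] [TopologicalSpace.SeparableSpace G]
    {H : Subgroup G} (hH : IsOpen (H : Set G)) : Countable (G ⧸ H) := by
  have := QuotientGroup.discreteTopology hH
  have := QuotientGroup.mk_surjective.denseRange.separableSpace
    (continuous_quotient_mk' : Continuous (QuotientGroup.mk : G → G ⧸ H))
  exact TopologicalSpace.separableSpace_iff_countable.1 this

theorem exists_exhausting_compactlyGenerated_open_subgroups [IsTopologicalGroup G]
    [LocallyCompactSpace G] [SigmaCompactSpace G] :
    ∃ H : ℕ → Subgroup G, Monotone H ∧ (∀ n, IsOpen (H n : Set G)) ∧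
      (∀ n, ∃ K, IsCompact K ∧ Subgroup.closure K = H n) ∧ ∀ g, ∃ n, g ∈ H n := by
  obtain ⟨V, hV, hV1⟩ := exists_compact_mem_nhds (1 : G)
  refine ⟨fun n => Subgroup.closure (V ∪ compactCovering G n), fun m n hmn =>
    Subgroup.closure_mono (Set.union_subset_union_right V (compactCovering_subset G hmn)),
    fun n => Subgroup.isOpen_of_mem_nhds _
      (Filter.mem_of_superset hV1 (Set.subset_union_left.trans Subgroup.subset_closure)),
    fun n => ⟨_, hV.union (isCompact_compactCovering G n), rfl⟩, fun g => ?_⟩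
  obtain ⟨n, hn⟩ := exists_mem_compactCovering g
  exact ⟨n, Subgroup.subset_closure (Or.inr hn)⟩

end CompactGeneration

theorem not_hasPropertyTlp_of_exhausting_open_subgroups {G : Type*} [Group G] [TopologicalSpace G]
    [IsTopologicalGroup G] {p : ℝ} (hp : 1 < p) (H : ℕ → Subgroup G) (hmono : Monotone H)
    (hopen : ∀ n, IsOpen (H n : Set G)) (hcover : ∀ g, ∃ n, g ∈ H n)
    [∀ n, Infinite (G ⧸ H n)] [∀ n, Countable (G ⧸ H n)] : ¬ HasPropertyTlp G p := by
  intro hT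
  have hp' : 1 < ENNReal.ofReal p := ENNReal.one_lt_ofReal.2 hp
  have : Fact (1 ≤ ENNReal.ofReal p) := ⟨hp'.le⟩
  have := fun n => QuotientGroup.discreteTopology (hopen n)
  obtain ⟨e⟩ := nonempty_equiv_of_countable (α := Σ n, G ⧸ H n) (β := ℕ)
  let a : G →* Equiv.Perm ℕ := e.permCongrHom.toMonoidHom.comp (MulAction.toPermHom G _)
  have ha_mk : ∀ g n (q : G ⧸ H n), a g (e ⟨n, q⟩) = e ⟨n, g • q⟩ := fun g n q => by
    simp [a, Sigma.smul_mk]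
  have ha : ∀ m, Continuous fun g => a g m := by
    intro m
    obtain ⟨⟨n, q⟩, rfl⟩ := e.surjective m
    simp only [ha_mk]
    exact continuous_of_discreteTopology.comp
      (continuous_sigmaMk.comp (continuous_id.smul continuous_const))
  refine hT (OrthRep.ofPerm ENNReal.ofReal_ne_top a ha)
    (OrthRep.hasAlmostInvariantSeq_ann_ofPerm hp' (fun n => e ⟨n, (1 : G)⟩) ?_ ?_)
  · intro Q hQ
    obtain ⟨N, hN⟩ := hQ.elim_directed_cover (fun n => (H n : Set G)) hopen
      (fun g _ => Set.mem_iUnion.2 (hcover g))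
      fun m n => ⟨max m n, hmono (le_max_left m n), hmono (le_max_right m n)⟩
    refine ⟨N, fun n hn g hg => ?_⟩
    simpa [ha_mk, QuotientGroup.eq] using hmono hn (hN hg)
  · intro n
    have hinj : Function.Injective fun q : G ⧸ H n => e ⟨n, q⟩ := fun q₁ q₂ h =>
      sigma_mk_injective (β := fun m => G ⧸ H m) (e.injective h)
    refine (Set.infinite_range_of_injective hinj).mono ?_
    rintro _ ⟨q, rfl⟩
    obtain ⟨g, rfl⟩ := QuotientGroup.mk_surjective q
    exact ⟨g, by simp [ha_mk]⟩

theorem compactly_generated_of_propertyTlp_general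
    (G : Type*) [Group G] [TopologicalSpace G] [IsTopologicalGroup G]
    [LocallyCompactSpace G] [SecondCountableTopology G]
    (p : ℝ) (hp1 : 1 < p) (hT : HasPropertyTlp G p) :
    ∃ K : Set G, IsCompact K ∧ Subgroup.closure K = ⊤ := by
  by_contra hG
  obtain ⟨H, hmono, hopen, hgen, hcover⟩ :=
    exists_exhausting_compactlyGenerated_open_subgroups (G := G)
  have hinf (n : ℕ) : Infinite (G ⧸ H n) := by
    obtain ⟨K, hK, hKH⟩ := hgen n
    rw [← hKH, ← not_finite_iff_infinite]
    exact fun _ => hG (exists_isCompact_closure_eq_top_of_finite_quotient hK)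
  have hcount (n : ℕ) : Countable (G ⧸ H n) := countable_quotient_of_isOpen (hopen n)
  exact not_hasPropertyTlp_of_exhausting_open_subgroups hp1 H hmono hopen hcover hT

/-- A second countable locally compact group with Property `(T_{ℓ_p})`
for some `1 < p < ∞` is compactly generated. -/
theorem compactly_generated_of_propertyTlp
    (G : Type*) [Group G] [TopologicalSpace G] [IsTopologicalGroup G]
    [LocallyCompactSpace G] [SecondCountableTopology G] [T2Space G]
    (p : ℝ) (hp1 : 1 < p) (hT : HasPropertyTlp G p) :
    ∃ K : Set G, IsCompact K ∧ Subgroup.closure K = ⊤ :=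
  compactly_generated_of_propertyTlp_general G p hp1 hT

end
end

section
/- Let G be a second countable locally compact group having Property (T_{ℓ_p}) for some real number p with 1 < p < ∞ and p ≠ 2, and let L be an open subgroup of G of finite index. Then L (with the subspace topology) has Property (T_{ℓ_p}). -/
open scoped ENNReal Pointwise
open Filter MeasureTheory

noncomputable section

/-!
Induce `π` from `L` to `G`. Choosing coset representatives `s(q) = q.out`, the group `G` acts
isometrically on `ℓ_p(G ⧸ L; ℓ_p) ≅ ℓ_p` by `(g • w)(q) = π(c(g, q)) (w (g⁻¹ q))`, where
`c(g, q) = s(q)⁻¹ g s(g⁻¹ q) ∈ L`; since `L` is open, `G ⧸ L` is discrete and this action is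
strongly continuous. If `(fₙ)` is a sequence of almost invariant unit vectors for `π` in `ℓ'_p(π)`,
the normalised diagonal vectors `|G ⧸ L|^(-1/p) (fₙ, …, fₙ)` are almost invariant for the induced
representation (a compact `K ⊆ G` gives compact sets `c(K, q) ⊆ L`). They lie in `ℓ'_p`: every
slice of a vector invariant under the dual of the induced representation is `π*`-invariant, as one
sees by letting `s(q) l s(q)⁻¹` act on vectors supported on the coset `q`. This contradicts
Property `(T_{ℓ_p})` of `G`.
-/

open WithLp
open scoped NNReal

section Memℓp

variable {α β E : Type*} [NormedAddCommGroup E] {p : ℝ≥0∞}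

theorem Memℓp.comp_injective {f : α → E} (hf : Memℓp f p) {e : β → α}
    (he : Function.Injective e) : Memℓp (f ∘ e) p := by
  rcases p.trichotomy with rfl | rfl | hp
  · exact memℓp_zero (hf.finite_dsupport.preimage he.injOn)
  · exact memℓp_infty (hf.bddAbove.mono (Set.range_comp_subset_range e (fun a => ‖f a‖)))
  · exact memℓp_gen ((hf.summable hp).comp_injective he)

theorem memℓp_prod_of_forall [Finite α] (hp : 0 < p.toReal) {F : α × β → E}
    (hF : ∀ a, Memℓp (fun b => F (a, b)) p) : Memℓp F p :=
  memℓp_gen <| (summable_prod_of_nonneg fun _ => by positivity).2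
    ⟨fun a => (hF a).summable hp, Summable.of_finite⟩

theorem Memℓp.summable_mul {𝕜 : Type*} [RCLike 𝕜]
    {q : ℝ≥0∞} [q.HolderConjugate p] {φ f : α → 𝕜} (hφ : Memℓp φ q) (hf : Memℓp f p) :
    Summable fun i => φ i * f i :=
  (hφ.holder 1 hf (fun _ => ContinuousLinearMap.mul 𝕜 𝕜)
    (fun _ => ContinuousLinearMap.opNorm_mul_le 𝕜 𝕜)).summable_of_one

end Memℓp

instance holderConjugate_conjExp {p : ℝ≥0∞} [Fact (1 ≤ p)] : (conjExp p).HolderConjugate p :=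
  ENNReal.holderConjugate_iff.2 <| by
    rw [conjExp, inv_inv, tsub_add_cancel_of_le (ENNReal.inv_le_one.2 Fact.out)]

section lpEquivPiLp

variable {ι κ Q E : Type*} [Fintype Q] [NormedAddCommGroup E] {p : ℝ≥0∞} [Fact (1 ≤ p)]

def lpEquivPiLp (𝕜 : Type*) [NormedField 𝕜] [NormedSpace 𝕜 E] (hp : p ≠ ∞) (e : ι ≃ Q × κ) :
    lp (fun _ : ι => E) p ≃ₗᵢ[𝕜] PiLp p fun _ : Q => lp (fun _ : κ => E) p where
  toFun f := toLp p fun q => ⟨fun k => f (e.symm (q, k)),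
    (lp.memℓp f).comp_injective (e.symm.injective.comp (Prod.mk_right_injective q))⟩
  invFun w := ⟨fun i => w (e i).1 (e i).2,
    (memℓp_prod_of_forall (p.toReal_pos_iff_ne_top.2 hp)
      (F := fun x : Q × κ => w x.1 x.2) fun q => lp.memℓp (w q)).comp_injective e.injective⟩
  map_add' f g := rfl
  map_smul' c f := rfl
  left_inv f := by ext i; simp
  right_inv w := by ext q k; simp
  norm_map' f := by
    have hp₀ : 0 < p.toReal := p.toReal_pos_iff_ne_top.2 hp
    have hf : Summable fun x : Q × κ => ‖f (e.symm x)‖ ^ p.toReal :=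
      e.symm.summable_iff.2 ((lp.memℓp f).summable hp₀)
    rw [PiLp.norm_eq_sum hp₀, lp.norm_eq_tsum_rpow hp₀,
      ← e.symm.tsum_eq fun i => ‖f i‖ ^ p.toReal, hf.tsum_prod, tsum_fintype]
    simp_rw [lp.norm_rpow_eq_tsum hp₀]
    rfl

@[simp]
theorem lpEquivPiLp_symm_apply (𝕜 : Type*) [NormedField 𝕜] [NormedSpace 𝕜 E] (hp : p ≠ ∞)
    (e : ι ≃ Q × κ) (w : PiLp p fun _ : Q => lp (fun _ : κ => E) p) (i : ι) :
    (lpEquivPiLp 𝕜 hp e).symm w i = w (e i).1 (e i).2 :=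
  rfl

theorem dualPair_lpEquivPiLp_symm {r : ℝ≥0∞} [r.HolderConjugate p] (hp : p ≠ ∞)
    (e : ι ≃ Q × κ) {φ : ι → ℂ} (hφ : Memℓp φ r)
    (w : PiLp p fun _ : Q => lp (fun _ : κ => ℂ) p) :
    dualPair φ ((lpEquivPiLp ℂ hp e).symm w) =
      ∑ q, dualPair (fun k => φ (e.symm (q, k))) (w q) := by
  have hsum : Summable fun x : Q × κ => φ (e.symm x) * w x.1 x.2 := by
    simpa [Function.comp_def] using
      e.symm.summable_iff.2 (hφ.summable_mul (lp.memℓp ((lpEquivPiLp ℂ hp e).symm w)))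
  rw [dualPair, ← e.symm.tsum_eq]
  simp only [lpEquivPiLp_symm_apply, Equiv.apply_symm_apply]
  rw [hsum.tsum_prod, tsum_fintype]
  rfl

end lpEquivPiLp

namespace Subgroup

variable {G : Type*} [Group G] (L : Subgroup G)

def inducedCocycle (g : G) (q : G ⧸ L) : L :=
  ⟨q.out⁻¹ * g * (g⁻¹ • q).out, by
    rw [mul_assoc, ← QuotientGroup.eq, QuotientGroup.out_eq', ← smul_eq_mul,
      MulAction.Quotient.mk_smul_out, smul_inv_smul]⟩

theorem coe_inducedCocycle (g : G) (q : G ⧸ L) :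
    (L.inducedCocycle g q : G) = q.out⁻¹ * g * (g⁻¹ • q).out :=
  rfl

theorem inducedCocycle_one (q : G ⧸ L) : L.inducedCocycle 1 q = 1 :=
  Subtype.ext <| by simp [coe_inducedCocycle]

theorem inducedCocycle_mul (g₁ g₂ : G) (q : G ⧸ L) :
    L.inducedCocycle (g₁ * g₂) q = L.inducedCocycle g₁ q * L.inducedCocycle g₂ (g₁⁻¹ • q) :=
  Subtype.ext <| by simp only [coe_mul, coe_inducedCocycle, mul_inv_rev, mul_smul]; group

theorem conj_out_smul (q : G ⧸ L) (l : L) : (q.out * l * q.out⁻¹) • q = q := by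
  rw [← MulAction.Quotient.mk_smul_out, smul_eq_mul, inv_mul_cancel_right,
    QuotientGroup.mk_mul_of_mem _ l.2, QuotientGroup.out_eq']

theorem inducedCocycle_conj_out (q : G ⧸ L) (l : L) :
    L.inducedCocycle (q.out * l * q.out⁻¹) q = l := by
  have h : (q.out * l * q.out⁻¹)⁻¹ • q = q := inv_smul_eq_iff.2 (L.conj_out_smul q l).symm
  exact Subtype.ext <| by rw [coe_inducedCocycle, h]; group

theorem continuous_inducedCocycle [TopologicalSpace G] [IsTopologicalGroup G]
    [DiscreteTopology (G ⧸ L)] (q : G ⧸ L) : Continuous fun g => L.inducedCocycle g q :=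
  Continuous.subtype_mk (f := fun g => q.out⁻¹ * g * (g⁻¹ • q).out)
    ((continuous_const.mul continuous_id).mul <|
      (continuous_of_discreteTopology (f := fun r : G ⧸ L => r.out)).comp
        (continuous_inv.smul continuous_const)) _

variable {𝕜 E : Type*} [NormedField 𝕜] [SeminormedAddCommGroup E] [NormedSpace 𝕜 E]
  (p : ℝ≥0∞) [Fact (1 ≤ p)] [Fintype (G ⧸ L)]

def inducedRep (ρ : L →* (E ≃ₗᵢ[𝕜] E)) :
    G →* (PiLp p (fun _ : G ⧸ L => E) ≃ₗᵢ[𝕜] PiLp p fun _ : G ⧸ L => E) where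
  toFun g := (LinearIsometryEquiv.piLpCongrLeft p 𝕜 E (MulAction.toPerm g)).trans
    (LinearIsometryEquiv.piLpCongrRight p fun q => ρ (L.inducedCocycle g q))
  map_one' := by
    ext w q
    simp [inducedCocycle_one]
  map_mul' g₁ g₂ := by
    ext w q
    simp [inducedCocycle_mul, mul_smul]

variable {L p}

@[simp]
theorem inducedRep_apply (ρ : L →* (E ≃ₗᵢ[𝕜] E)) (g : G) (w : PiLp p fun _ : G ⧸ L => E)
    (q : G ⧸ L) : L.inducedRep p ρ g w q = ρ (L.inducedCocycle g q) (w (g⁻¹ • q)) :=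
  rfl

theorem inducedRep_single [DecidableEq (G ⧸ L)] (ρ : L →* (E ≃ₗᵢ[𝕜] E)) (q : G ⧸ L) (l : L)
    (x : E) :
    L.inducedRep p ρ (q.out * l * q.out⁻¹) (PiLp.single p q x) = PiLp.single p q (ρ l x) := by
  ext r
  rw [inducedRep_apply]
  by_cases hr : r = q
  · subst hr
    rw [inv_smul_eq_iff.2 (L.conj_out_smul r l).symm, inducedCocycle_conj_out,
      PiLp.single_eq_same, PiLp.single_eq_same]
  · have hr' : (q.out * l * q.out⁻¹)⁻¹ • r ≠ q := by
      rwa [Ne, inv_smul_eq_iff, L.conj_out_smul q l]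
    rw [PiLp.single_eq_of_ne p hr', PiLp.single_eq_of_ne p hr, map_zero]

theorem continuous_inducedRep_apply [TopologicalSpace G] [IsTopologicalGroup G]
    [DiscreteTopology (G ⧸ L)] {ρ : L →* (E ≃ₗᵢ[𝕜] E)} (hρ : ∀ x, Continuous fun l => ρ l x)
    (w : PiLp p fun _ : G ⧸ L => E) : Continuous fun g => L.inducedRep p ρ g w := by
  refine (PiLp.continuous_toLp p _).comp (continuous_pi fun q => ?_)
  have hΦ : Continuous fun x : G × (G ⧸ L) => ρ (L.inducedCocycle x.1 q) (w x.2) :=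
    continuous_prod_of_discrete_right.2 fun r => (hρ (w r)).comp (L.continuous_inducedCocycle q)
  exact hΦ.comp (continuous_id.prodMk (continuous_inv.smul continuous_const))

theorem norm_inducedRep_const_sub_le {ρ : L →* (E ≃ₗᵢ[𝕜] E)} {g : G} {x : E} {ε : ℝ}
    (h : ∀ q, ‖ρ (L.inducedCocycle g q) x - x‖ ≤ ε) :
    ‖L.inducedRep p ρ g (toLp p (Function.const _ x)) - toLp p (Function.const _ x)‖ ≤
      (Fintype.card (G ⧸ L) : ℝ≥0) ^ (1 / p).toReal * ε := by
  have hε : 0 ≤ ε := (norm_nonneg _).trans (h (QuotientGroup.mk 1))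
  rw [← dist_eq_norm]
  refine ((PiLp.lipschitzWith_toLp p _).dist_le_mul
    (fun q => ρ (L.inducedCocycle g q) x) _).trans ?_
  rw [NNReal.coe_rpow, NNReal.coe_natCast]
  exact mul_le_mul_of_nonneg_left
    ((dist_pi_le_iff hε).2 fun q => (dist_eq_norm _ _).trans_le (h q)) (by positivity)

end Subgroup

namespace OrthRep

variable {G : Type*} [Group G] [TopologicalSpace G] {p : ℝ≥0∞} [Fact (1 ≤ p)]

def conj {E : Type*} [NormedAddCommGroup E] [NormedSpace ℂ E]
    (T : lp (fun _ : ℕ => ℂ) p ≃ₗᵢ[ℂ] E) (ρ : G →* (E ≃ₗᵢ[ℂ] E))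
    (hρ : ∀ x, Continuous fun g => ρ g x) : OrthRep G p where
  toFun :=
    { toFun g := (T.trans (ρ g)).trans T.symm
      map_one' := by ext f; simp
      map_mul' g h := by ext f; simp }
  continuous_apply f := T.symm.continuous.comp (hρ (T f))

theorem smul_mem_ann {π : OrthRep G p} (c : ℂ) {f : lp (fun _ : ℕ => ℂ) p} (hf : f ∈ π.ann) :
    c • f ∈ π.ann := fun φ hφ => by
  have h := hf φ hφ
  simp only [dualPair] at h ⊢
  simp only [lp.coeFn_smul, Pi.smul_apply, smul_eq_mul, mul_left_comm _ c, tsum_mul_left, h,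
    mul_zero]

variable [IsTopologicalGroup G] {L : Subgroup G} [Fintype (G ⧸ L)] [DiscreteTopology (G ⧸ L)]

def induced (π : OrthRep L p) (hp : p ≠ ∞) (e : ℕ ≃ (G ⧸ L) × ℕ) : OrthRep G p :=
  conj (lpEquivPiLp ℂ hp e) (L.inducedRep p π.toFun)
    (Subgroup.continuous_inducedRep_apply π.continuous_apply)

variable {π : OrthRep L p} {hp : p ≠ ∞} {e : ℕ ≃ (G ⧸ L) × ℕ}

theorem induced_apply_symm (g : G) (w : PiLp p fun _ : G ⧸ L => lp (fun _ : ℕ => ℂ) p) :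
    (π.induced hp e).toFun g ((lpEquivPiLp (E := ℂ) ℂ hp e).symm w) =
      (lpEquivPiLp (E := ℂ) ℂ hp e).symm (L.inducedRep p π.toFun g w) := by
  simp [induced, conj]

theorem DualInvariant.slice {φ : ℕ → ℂ} (hφ : (π.induced hp e).DualInvariant φ) (q : G ⧸ L) :
    π.DualInvariant fun k => φ (e.symm (q, k)) := by
  classical
  refine ⟨hφ.1.comp_injective (e.symm.injective.comp (Prod.mk_right_injective q)), fun l v => ?_⟩
  have hsingle : ∀ x : lp (fun _ : ℕ => ℂ) p,
      dualPair φ ((lpEquivPiLp ℂ hp e).symm (PiLp.single p q x)) =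
        dualPair (fun k => φ (e.symm (q, k))) x := fun x => by
    rw [dualPair_lpEquivPiLp_symm hp e hφ.1, Finset.sum_eq_single q, PiLp.single_eq_same]
    · intro r _ hr
      simp [dualPair, hr]
    · simp
  rw [← hsingle, ← hsingle, ← L.inducedRep_single, ← induced_apply_symm]
  exact hφ.2 _ _

theorem lpEquivPiLp_symm_const_mem_ann {v : lp (fun _ : ℕ => ℂ) p} (hv : v ∈ π.ann) :
    (lpEquivPiLp ℂ hp e).symm (toLp p (Function.const _ v)) ∈ (π.induced hp e).ann :=
  fun φ hφ => by
    rw [dualPair_lpEquivPiLp_symm hp e hφ.1]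
    exact Finset.sum_eq_zero fun q _ => hv _ (hφ.slice q)

variable (hp e) in
theorem HasAlmostInvariantSeq.induced (hπ : π.HasAlmostInvariantSeq π.ann) :
    (π.induced hp e).HasAlmostInvariantSeq (π.induced hp e).ann := by
  obtain ⟨f, hf_ann, hf_norm, hf_inv⟩ := hπ
  set c : ℝ := (Fintype.card (G ⧸ L) : ℝ≥0) ^ (1 / p).toReal with hc
  have hc₀ : 0 < c := by positivity
  refine ⟨fun n => ((c⁻¹ : ℝ) : ℂ) • (lpEquivPiLp ℂ hp e).symm (toLp p (Function.const _ (f n))),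
    fun n => smul_mem_ann _ (lpEquivPiLp_symm_const_mem_ann (hf_ann n)), fun n => ?_, ?_⟩
  · rw [norm_smul, LinearIsometryEquiv.norm_map, PiLp.norm_toLp_const hp, hf_norm, ← hc,
      Complex.norm_real, Real.norm_of_nonneg (inv_nonneg.2 hc₀.le), mul_one,
      inv_mul_cancel₀ hc₀.ne']
  intro K hK ε hε
  obtain ⟨N, hN⟩ := hf_inv (⋃ q, (fun g => L.inducedCocycle g q) '' K)
    (isCompact_iUnion fun q => hK.image (L.continuous_inducedCocycle q)) (ε / 2) (half_pos hε)
  refine ⟨N, fun n hn g hg => ?_⟩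
  have hle := Subgroup.norm_inducedRep_const_sub_le (p := p) (ρ := π.toFun) (g := g) (x := f n)
    fun q => (hN n hn _ (Set.mem_iUnion.2 ⟨q, g, hg, rfl⟩)).le
  calc _ = c⁻¹ * ‖L.inducedRep p π.toFun g (toLp p (Function.const _ (f n))) -
        toLp p (Function.const _ (f n))‖ := by
        rw [map_smul, induced_apply_symm, ← smul_sub, ← map_sub, norm_smul,
          LinearIsometryEquiv.norm_map, Complex.norm_real,
          Real.norm_of_nonneg (inv_nonneg.2 hc₀.le)]
    _ ≤ c⁻¹ * (c * (ε / 2)) := by gcongr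
    _ < ε := by rw [inv_mul_cancel_left₀ hc₀.ne']; linarith

end OrthRep

theorem propertyTlp_of_finiteIndex_subgroup_general
    (G : Type*) [Group G] [TopologicalSpace G] [IsTopologicalGroup G]
    (p : ℝ) (hT : HasPropertyTlp G p)
    (L : Subgroup G) (hopen : IsOpen (L : Set G)) (hfin : L.FiniteIndex) :
    HasPropertyTlp L p := by
  intro _ π hπ
  have : Fintype (G ⧸ L) := Fintype.ofFinite _
  have : DiscreteTopology (G ⧸ L) := QuotientGroup.discreteTopology hopen
  obtain ⟨e⟩ : Nonempty (ℕ ≃ (G ⧸ L) × ℕ) := nonempty_equiv_of_countable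
  exact hT _ (hπ.induced ENNReal.ofReal_ne_top e)

/-- An open finite-index subgroup of a second countable locally compact
group with Property `(T_{ℓ_p})` (`1 < p < ∞`, `p ≠ 2`) has Property `(T_{ℓ_p})`. -/
theorem propertyTlp_of_finiteIndex_subgroup
    (G : Type*) [Group G] [TopologicalSpace G] [IsTopologicalGroup G]
    [LocallyCompactSpace G] [SecondCountableTopology G] [T2Space G]
    (p : ℝ) (hp1 : 1 < p) (hp2 : p ≠ 2) (hT : HasPropertyTlp G p)
    (L : Subgroup G) (hopen : IsOpen (L : Set G)) (hfin : L.FiniteIndex) :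
    HasPropertyTlp L p :=
  propertyTlp_of_finiteIndex_subgroup_general G p hT L hopen hfin
end
end

section
/- Let G̃ be a second countable locally compact group and let G be an open subgroup of G̃ of finite index. If G has Property (T_{ℓ_p}) for some real number p with 1 < p < ∞ and p ≠ 2, then G̃ has Property (T_{ℓ_p}). -/
open scoped ENNReal Pointwise
open Filter MeasureTheory

noncomputable section

/-! Restrict `π` to `G`. The coinvariants `W = span {π(h) u - u | h ∈ G}` lie in `ℓ'_p(π|_G)`.
If `ξ` is a functional of norm at most one vanishing on `W` with `ξ f = dist(f, W)`, then
`∑_c ξ ∘ π(t_c)` over representatives `t_c` of `G \ G̃` is `G̃`-invariant; since `(ℓ_p)^* = ℓ_q`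
it is given by a `π*`-invariant vector of `ℓ_q`, so it kills every `f ∈ ℓ'_p(π)`. Hence
`[G̃ : G] · dist(f, W) ≤ ∑_c ‖π(t_c) f - f‖`, so almost invariant unit vectors of `π` in `ℓ'_p(π)`
are close to `W`, and normalising nearby vectors of `W` gives almost invariant unit vectors of
`π|_G` in `ℓ'_p(π|_G)`. -/

open scoped Topology
open Metric

local notation "ℓ[" p "]" => lp (fun _ : ℕ => ℂ) p

lemma Real.HolderConjugate.rpow_le_rpow_of_rpow_le_mul {p q t C : ℝ} (hpq : p.HolderConjugate q)
    (ht : 0 ≤ t) (hC : 0 ≤ C) (h : t ^ p ≤ C * t) : t ^ p ≤ C ^ q := by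
  rcases ht.eq_or_lt with rfl | ht
  · rw [Real.zero_rpow hpq.ne_zero]
    positivity
  have hle : t ^ (p - 1) ≤ C := by
    rwa [Real.rpow_sub_one ht.ne', div_le_iff₀ ht]
  calc t ^ p = (t ^ (p - 1)) ^ q := by rw [← Real.rpow_mul ht.le, hpq.sub_one_mul_conj]
    _ ≤ C ^ q := Real.rpow_le_rpow (by positivity) hle hpq.symm.nonneg

lemma Complex.mul_ofReal_rpow_div_self (z : ℂ) {q : ℝ} (hq : q ≠ 0) :
    z * ((‖z‖ ^ q : ℝ) / z) = (‖z‖ ^ q : ℝ) := by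
  rcases eq_or_ne z 0 with rfl | hz
  · simp [Real.zero_rpow hq]
  · exact mul_div_cancel₀ _ hz

lemma Complex.norm_ofReal_rpow_div_self (z : ℂ) {q : ℝ} (hq : q ≠ 1) :
    ‖((‖z‖ ^ q : ℝ) : ℂ) / z‖ = ‖z‖ ^ (q - 1) := by
  rcases eq_or_ne z 0 with rfl | hz
  · simp [Real.zero_rpow (sub_ne_zero.2 hq)]
  · rw [norm_div, Complex.norm_real, Real.norm_of_nonneg (by positivity),
      Real.rpow_sub_one (norm_ne_zero_iff.2 hz)]

section Duality

variable {p : ℝ≥0∞}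

lemma holderConjugate_conjExp_s7 (hp : 1 ≤ p) : p.HolderConjugate (conjExp p) := by
  rw [ENNReal.holderConjugate_iff, conjExp, inv_inv,
    add_tsub_cancel_of_le (ENNReal.inv_le_one.2 hp)]

instance [Fact (1 ≤ p)] : p.HolderConjugate (conjExp p) := holderConjugate_conjExp_s7 Fact.out

instance [Fact (1 ≤ p)] : Fact (1 ≤ conjExp p) := ⟨ENNReal.HolderConjugate.one_le _ p⟩

namespace lp

variable [Fact (1 ≤ p)]

def dualPairCLM (φ : ℓ[conjExp p]) : StrongDual ℂ ℓ[p] :=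
  dualPairing (conjExp p) p (fun _ => ContinuousLinearMap.mul ℂ ℂ) (K := 1)
    (fun _ => ContinuousLinearMap.opNorm_mul_le _ _) φ

lemma dualPairCLM_apply (φ : ℓ[conjExp p]) (f : ℓ[p]) : dualPairCLM φ f = dualPair φ f :=
  rfl

variable (ψ : StrongDual ℂ ℓ[p])

lemma dual_apply_single (x : ℕ) (z : ℂ) : ψ (lp.single p x z) = z * ψ (lp.single p x 1) := by
  rw [← smul_eq_mul, ← map_smul, ← lp.single_smul, smul_eq_mul, mul_one]

lemma hasSum_dual_apply_single (hp : p ≠ ∞) (f : ℓ[p]) :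
    HasSum (fun x => ψ (lp.single p x 1) * f x) (ψ f) := by
  have hterm : (fun x => ψ (lp.single p x (f x))) = fun x => ψ (lp.single p x 1) * f x :=
    funext fun x => by rw [dual_apply_single, mul_comm]
  exact hterm ▸ (lp.hasSum_single hp f).mapL ψ

lemma sum_norm_dual_apply_single_rpow_le (hp : 1 < p) (hp' : p ≠ ∞) (s : Finset ℕ) :
    ∑ x ∈ s, ‖ψ (lp.single p x 1)‖ ^ (conjExp p).toReal ≤ ‖ψ‖ ^ (conjExp p).toReal := by
  set P := p.toReal
  set Q := (conjExp p).toReal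
  have hPQ : P.HolderConjugate Q := ENNReal.HolderConjugate.toReal
    ((ENNReal.toReal_lt_toReal ENNReal.one_ne_top hp').2 hp)
  set φ := fun x => ψ (lp.single p x 1)
  -- the coordinates `‖φ x‖ ^ Q / φ x` make Hölder's inequality an equality
  set v := ∑ x ∈ s, lp.single p x (((‖φ x‖ ^ Q : ℝ) : ℂ) / φ x)
  have hψv : ψ v = ((∑ x ∈ s, ‖φ x‖ ^ Q : ℝ) : ℂ) := by
    rw [map_sum, Complex.ofReal_sum]
    refine Finset.sum_congr rfl fun x _ => ?_
    rw [dual_apply_single, mul_comm, Complex.mul_ofReal_rpow_div_self _ hPQ.symm.ne_zero]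
  have hv : ‖v‖ ^ P = ∑ x ∈ s, ‖φ x‖ ^ Q := by
    rw [lp.norm_sum_single hPQ.pos]
    refine Finset.sum_congr rfl fun x _ => ?_
    rw [Complex.norm_ofReal_rpow_div_self _ hPQ.symm.lt.ne', ← Real.rpow_mul (norm_nonneg _),
      hPQ.symm.sub_one_mul_conj]
  rw [← hv]
  refine hPQ.rpow_le_rpow_of_rpow_le_mul (norm_nonneg _) (norm_nonneg _) ?_
  calc ‖v‖ ^ P = ‖ψ v‖ := by
        rw [hψv, hv, Complex.norm_real, Real.norm_of_nonneg (by positivity)]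
    _ ≤ ‖ψ‖ * ‖v‖ := ψ.le_opNorm v

theorem exists_memℓp_conjExp_dualPair_eq (hp : 1 < p) (hp' : p ≠ ∞) :
    ∃ φ : ℕ → ℂ, Memℓp φ (conjExp p) ∧ ∀ f : ℓ[p], ψ f = dualPair φ f := by
  refine ⟨fun x => ψ (lp.single p x 1), memℓp_gen ?_,
    fun f => ((hasSum_dual_apply_single ψ hp' f).tsum_eq).symm⟩
  exact summable_of_sum_le (fun _ => by positivity)
    (sum_norm_dual_apply_single_rpow_le ψ hp hp')

end lp

end Duality

theorem exists_dual_eq_infDist {𝕜 E : Type*} [RCLike 𝕜] [SeminormedAddCommGroup E]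
    [NormedSpace 𝕜 E] (W : Submodule 𝕜 E) (x : E) :
    ∃ ξ : StrongDual 𝕜 E, ‖ξ‖ ≤ 1 ∧ (∀ w ∈ W, ξ w = 0) ∧ ξ x = infDist x W := by
  obtain ⟨g, hg, hgx⟩ := exists_dual_vector'' 𝕜 (W.mkQ x)
  have hmk : ‖W.mkQL‖ ≤ 1 :=
    ContinuousLinearMap.opNorm_le_bound _ zero_le_one fun y => by
      simpa using Submodule.Quotient.norm_mk_le W y
  refine ⟨g ∘L W.mkQL, ?_, fun w hw => ?_, ?_⟩
  · calc ‖g ∘L W.mkQL‖ ≤ ‖g‖ * ‖W.mkQL‖ := g.opNorm_comp_le _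
      _ ≤ 1 * 1 := by gcongr
      _ = 1 := one_mul 1
  · simp [(Submodule.Quotient.mk_eq_zero W).2 hw]
  · rw [ContinuousLinearMap.comp_apply, Submodule.mkQL_apply, hgx]
    exact congrArg _ (QuotientAddGroup.norm_mk (S := W.toAddSubgroup) x)

lemma NormedSpace.norm_sub_normalize_le {V : Type*} [NormedAddCommGroup V] [NormedSpace ℝ V]
    {x : V} (hx : ‖x‖ = 1) (y : V) : ‖x - normalize y‖ ≤ 2 * ‖x - y‖ := by
  have hy : ‖y - normalize y‖ ≤ ‖x - y‖ := by
    calc ‖y - normalize y‖ = ‖(‖y‖ - 1) • normalize y‖ := by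
          rw [sub_smul, norm_smul_normalize, one_smul]
      _ ≤ |‖y‖ - 1| := by
          rw [norm_smul, Real.norm_eq_abs]
          refine mul_le_of_le_one_right (abs_nonneg _) ?_
          rcases eq_or_ne y 0 with rfl | hy
          · simp
          · exact (norm_normalize hy).le
      _ ≤ ‖x - y‖ := by
          rw [← hx, abs_sub_comm]
          exact abs_norm_sub_norm_le x y
  calc ‖x - normalize y‖ ≤ ‖x - y‖ + ‖y - normalize y‖ := norm_sub_le_norm_sub_add_norm_sub _ _ _
    _ ≤ 2 * ‖x - y‖ := by linarith

lemma QuotientGroup.sum_apply_mul_out {G M : Type*} [Group G] [AddCommMonoid M] {H : Subgroup G}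
    [Fintype (G ⧸ H)] {F : G → M} (hF : ∀ g, ∀ h ∈ H, F (g * h) = F g) (x : G) :
    ∑ c : G ⧸ H, F (x * c.out) = ∑ c : G ⧸ H, F c.out := by
  have hout : ∀ g : G, F (mk g : G ⧸ H).out = F g := fun g => by
    obtain ⟨h, hh⟩ := mk_out_eq_mul H g
    rw [hh, hF g h h.2]
  calc ∑ c : G ⧸ H, F (x * c.out) = ∑ c : G ⧸ H, F (x • c).out := by
        refine Finset.sum_congr rfl fun c _ => ?_
        rw [← hout, ← smul_eq_mul, ← MulAction.Quotient.smul_mk, out_eq']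
    _ = ∑ c : G ⧸ H, F c.out := Equiv.sum_comp (MulAction.toPerm x) (fun c : G ⧸ H => F c.out)

namespace OrthRep

variable {G : Type*} [Group G] [TopologicalSpace G] {p : ℝ≥0∞} [Fact (1 ≤ p)]
  (π : OrthRep G p)

def restrict (H : Subgroup G) : OrthRep H p where
  toFun := π.toFun.comp H.subtype
  continuous_apply f := (π.continuous_apply f).comp continuous_subtype_val

lemma toFun_mul_apply (g g' : G) (f : ℓ[p]) :
    π.toFun (g * g') f = π.toFun g (π.toFun g' f) := by
  rw [map_mul, LinearIsometryEquiv.coe_mul, Function.comp_apply]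

def coinvariantsKer : Submodule ℂ ℓ[p] :=
  Submodule.span ℂ (Set.range fun gf : G × ℓ[p] => π.toFun gf.1 gf.2 - gf.2)

lemma coinvariantsKer_subset_ann : (π.coinvariantsKer : Set ℓ[p]) ⊆ π.ann := by
  intro f hf φ hφ
  set L := lp.dualPairCLM ⟨φ, hφ.1⟩
  have hker : π.coinvariantsKer ≤ LinearMap.ker (L : ℓ[p] →ₗ[ℂ] ℂ) := by
    refine Submodule.span_le.2 ?_
    rintro _ ⟨⟨g, u⟩, rfl⟩
    simp only [SetLike.mem_coe, LinearMap.mem_ker, ContinuousLinearMap.coe_coe, map_sub,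
      L, lp.dualPairCLM_apply, hφ.2 g u, sub_self]
  exact hker hf

lemma apply_eq_zero_of_mem_ann (hp : 1 < p) (hp' : p ≠ ∞) (ψ : StrongDual ℂ ℓ[p])
    (hψ : ∀ g f, ψ (π.toFun g f) = ψ f) {f : ℓ[p]} (hf : f ∈ π.ann) : ψ f = 0 := by
  obtain ⟨φ, hφ, hψφ⟩ := lp.exists_memℓp_conjExp_dualPair_eq ψ hp hp'
  rw [hψφ]
  exact hf φ ⟨hφ, fun g f => by rw [← hψφ, ← hψφ, hψ]⟩

def IsAlmostInvariant (f : ℕ → ℓ[p]) : Prop :=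
  ∀ Q : Set G, IsCompact Q → ∀ ε : ℝ, 0 < ε → ∃ N : ℕ, ∀ n ≥ N, ∀ g ∈ Q,
    ‖π.toFun g (f n) - f n‖ < ε

variable {π}

lemma hasAlmostInvariantSeq_iff {S : Set ℓ[p]} : π.HasAlmostInvariantSeq S ↔
    ∃ f : ℕ → ℓ[p], (∀ n, f n ∈ S) ∧ (∀ n, ‖f n‖ = 1) ∧ π.IsAlmostInvariant f :=
  Iff.rfl

lemma HasAlmostInvariantSeq.mono {S T : Set ℓ[p]} (h : π.HasAlmostInvariantSeq S) (hST : S ⊆ T) :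
    π.HasAlmostInvariantSeq T :=
  let ⟨f, hfS, hf⟩ := h
  ⟨f, fun n => hST (hfS n), hf⟩

namespace IsAlmostInvariant

variable {f : ℕ → ℓ[p]}

lemma restrict (hf : π.IsAlmostInvariant f) (H : Subgroup G) : (π.restrict H).IsAlmostInvariant f :=
  fun _ hQ ε hε =>
    let ⟨N, hN⟩ := hf _ (hQ.image continuous_subtype_val) ε hε
    ⟨N, fun n hn g hg => hN n hn g ⟨g, hg, rfl⟩⟩

lemma tendsto_norm_sub (hf : π.IsAlmostInvariant f) (g : G) :
    Tendsto (fun n => ‖π.toFun g (f n) - f n‖) atTop (𝓝 0) := by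
  refine Metric.tendsto_atTop.2 fun ε hε => ?_
  obtain ⟨N, hN⟩ := hf {g} isCompact_singleton ε hε
  exact ⟨N, fun n hn => by simpa using hN n hn g rfl⟩

lemma comp_add (hf : π.IsAlmostInvariant f) (k : ℕ) : π.IsAlmostInvariant (fun n => f (n + k)) :=
  fun Q hQ ε hε =>
    let ⟨N, hN⟩ := hf Q hQ ε hε
    ⟨N, fun n hn => hN (n + k) (by omega)⟩

lemma of_tendsto_norm_sub (hf : π.IsAlmostInvariant f) {f' : ℕ → ℓ[p]}
    (hff' : Tendsto (fun n => ‖f n - f' n‖) atTop (𝓝 0)) : π.IsAlmostInvariant f' := by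
  intro Q hQ ε hε
  obtain ⟨N₁, hN₁⟩ := hf Q hQ (ε / 3) (by positivity)
  obtain ⟨N₂, hN₂⟩ := Metric.tendsto_atTop.1 hff' (ε / 3) (by positivity)
  refine ⟨max N₁ N₂, fun n hn g hg => ?_⟩
  have h₁ := hN₁ n (le_of_max_le_left hn) g hg
  have h₂ : ‖f n - f' n‖ < ε / 3 := by simpa using hN₂ n (le_of_max_le_right hn)
  calc ‖π.toFun g (f' n) - f' n‖
      = ‖π.toFun g (f' n - f n) + (π.toFun g (f n) - f n) + (f n - f' n)‖ := by
        rw [map_sub]; abel_nf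
    _ ≤ ‖f' n - f n‖ + ‖π.toFun g (f n) - f n‖ + ‖f n - f' n‖ := by
        rw [← LinearIsometryEquiv.norm_map (π.toFun g) (f' n - f n)]
        exact norm_add₃_le
    _ < ε := by rw [norm_sub_rev (f' n)]; linarith

lemma hasAlmostInvariantSeq {S : Set ℓ[p]} (hf : π.IsAlmostInvariant f)
    (hS : ∀ᶠ n in atTop, f n ∈ S ∧ ‖f n‖ = 1) : π.HasAlmostInvariantSeq S := by
  obtain ⟨k, hk⟩ := eventually_atTop.1 hS
  exact ⟨fun n => f (n + k), fun n => (hk _ (by omega)).1, fun n => (hk _ (by omega)).2,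
    hf.comp_add k⟩

lemma hasAlmostInvariantSeq_of_tendsto_infDist (hf : π.IsAlmostInvariant f)
    (hf1 : ∀ n, ‖f n‖ = 1) (W : Submodule ℂ ℓ[p])
    (hW : Tendsto (fun n => infDist (f n) W) atTop (𝓝 0)) :
    π.HasAlmostInvariantSeq W := by
  have hclose : ∀ n : ℕ, ∃ w ∈ W, ‖f n - w‖ < infDist (f n) W + 1 / (n + 1) := fun n => by
    simpa [dist_eq_norm] using
      (infDist_lt_iff ⟨0, W.zero_mem⟩).1 (lt_add_of_pos_right _ Nat.one_div_pos_of_nat)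
  choose w hwW hw using hclose
  have hfw : Tendsto (fun n => ‖f n - w n‖) atTop (𝓝 0) := by
    refine squeeze_zero (fun _ => norm_nonneg _) (fun n => (hw n).le) ?_
    simpa using hW.add tendsto_one_div_add_atTop_nhds_zero_nat
  refine (hf.of_tendsto_norm_sub (f' := fun n => NormedSpace.normalize (w n)) ?_)
    |>.hasAlmostInvariantSeq ?_
  · refine squeeze_zero (fun _ => norm_nonneg _)
      (fun n => NormedSpace.norm_sub_normalize_le (hf1 n) (w n)) ?_
    simpa using hfw.const_mul 2
  · filter_upwards [(tendsto_order.1 hfw).2 1 one_pos] with n hn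
    refine ⟨W.smul_of_tower_mem _ (hwW n), NormedSpace.norm_normalize ?_⟩
    rintro hw0
    simp [hw0, hf1 n] at hn

end IsAlmostInvariant

variable (π) in
theorem card_mul_infDist_coinvariantsKer_le (hp : 1 < p) (hp' : p ≠ ∞) {H : Subgroup G}
    [Fintype (G ⧸ H)] {f : ℓ[p]} (hf : f ∈ π.ann) :
    Fintype.card (G ⧸ H) * infDist f (π.restrict H).coinvariantsKer ≤
      ∑ c : G ⧸ H, ‖π.toFun c.out⁻¹ f - f‖ := by
  obtain ⟨ξ, hξ1, hξW, hξf⟩ := exists_dual_eq_infDist (π.restrict H).coinvariantsKer f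
  have hξH : ∀ h ∈ H, ∀ v, ξ (π.toFun h v) = ξ v := fun h hh v =>
    sub_eq_zero.1 <| by
      rw [← map_sub]
      exact hξW _ (Submodule.subset_span ⟨(⟨h, hh⟩, v), rfl⟩)
  set ψ : StrongDual ℂ ℓ[p] := ∑ c : G ⧸ H, ξ ∘L (π.toFun c.out⁻¹ : ℓ[p] →L[ℂ] ℓ[p])
  have hψ_apply : ∀ v, ψ v = ∑ c : G ⧸ H, ξ (π.toFun c.out⁻¹ v) := fun v => by
    simp only [ψ, _root_.sum_apply]
    rfl
  have hψ : ∀ g v, ψ (π.toFun g v) = ψ v := fun g v => by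
    simp only [hψ_apply, ← toFun_mul_apply]
    simpa only [mul_inv_rev, inv_inv] using QuotientGroup.sum_apply_mul_out
      (F := fun y => ξ (π.toFun y⁻¹ v))
      (fun y h hh => by rw [mul_inv_rev, toFun_mul_apply, hξH _ (H.inv_mem hh)]) g⁻¹
  have hψf : ψ f = 0 := π.apply_eq_zero_of_mem_ann hp hp' ψ hψ hf
  calc Fintype.card (G ⧸ H) * infDist f (π.restrict H).coinvariantsKer
      = ‖∑ c : G ⧸ H, ξ (f - π.toFun c.out⁻¹ f)‖ := by
        simp only [map_sub, Finset.sum_sub_distrib, ← hψ_apply, hψf, sub_zero, Finset.sum_const,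
          Finset.card_univ, nsmul_eq_mul, hξf, norm_mul, Complex.norm_natCast, RCLike.norm_ofReal,
          abs_of_nonneg infDist_nonneg]
    _ ≤ ∑ c : G ⧸ H, ‖ξ (f - π.toFun c.out⁻¹ f)‖ := norm_sum_le _ _
    _ ≤ ∑ c : G ⧸ H, ‖π.toFun c.out⁻¹ f - f‖ := by
        refine Finset.sum_le_sum fun c _ => ?_
        rw [norm_sub_rev]
        exact ξ.le_of_opNorm_le hξ1 _ |>.trans_eq (one_mul _)

theorem HasAlmostInvariantSeq.restrict_ann (hp : 1 < p) (hp' : p ≠ ∞) {H : Subgroup G}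
    [H.FiniteIndex] (h : π.HasAlmostInvariantSeq π.ann) :
    (π.restrict H).HasAlmostInvariantSeq (π.restrict H).ann := by
  have := Fintype.ofFinite (G ⧸ H)
  obtain ⟨f, hf, hf1, hfπ⟩ := hasAlmostInvariantSeq_iff.1 h
  have hcard : (0 : ℝ) < Fintype.card (G ⧸ H) := Nat.cast_pos.2 Fintype.card_pos
  have hdisp : Tendsto (fun n => (∑ c : G ⧸ H, ‖π.toFun c.out⁻¹ (f n) - f n‖) /
      Fintype.card (G ⧸ H)) atTop (𝓝 0) := by
    simpa using
      (tendsto_finsetSum _ fun (c : G ⧸ H) _ => hfπ.tendsto_norm_sub c.out⁻¹).div_const _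
  have hdist := squeeze_zero (fun _ => infDist_nonneg) (fun n => (le_div_iff₀' hcard).2
    (π.card_mul_infDist_coinvariantsKer_le hp hp' (hf n))) hdisp
  exact ((hfπ.restrict H).hasAlmostInvariantSeq_of_tendsto_infDist hf1 _ hdist).mono
    (π.restrict H).coinvariantsKer_subset_ann

end OrthRep

theorem propertyTlp_of_finiteIndex_overgroup_general
    (G' : Type*) [Group G'] [TopologicalSpace G']
    (G : Subgroup G') (hfin : G.FiniteIndex)
    (p : ℝ) (hp1 : 1 < p) (hT : HasPropertyTlp G p) :
    HasPropertyTlp G' p := fun π hπ =>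
  hT (π.restrict G) (hπ.restrict_ann (ENNReal.one_lt_ofReal.2 hp1) ENNReal.ofReal_ne_top)

/-- If an open finite-index subgroup `G` of a second countable locally
compact group `G̃` has Property `(T_{ℓ_p})` (`1 < p < ∞`, `p ≠ 2`), then so does `G̃`. -/
theorem propertyTlp_of_finiteIndex_overgroup
    (G' : Type*) [Group G'] [TopologicalSpace G'] [IsTopologicalGroup G']
    [LocallyCompactSpace G'] [SecondCountableTopology G'] [T2Space G']
    (G : Subgroup G') (hopen : IsOpen (G : Set G')) (hfin : G.FiniteIndex)
    (p : ℝ) (hp1 : 1 < p) (hp2 : p ≠ 2) (hT : HasPropertyTlp G p) :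
    HasPropertyTlp G' p :=
  propertyTlp_of_finiteIndex_overgroup_general G' G hfin p hp1 hT

end
end

section
/- Let G be a connected topological group and Γ a dense subgroup of G. Let H₁, …, Hₙ be finitely many subgroups of Γ such that no Hᵢ is dense in G, let a₁, …, aₙ ∈ Γ, and set X = ⋃_{i=1}^n aᵢHᵢ. Then Γ \ X is dense in G. -/
open scoped Pointwise

/-! In a connected group an open subgroup is everything, so the closure of a non-dense subgroup,
being a subgroup, has empty interior; that is, every coset `aᵢHᵢ` is nowhere dense. A finite
union of nowhere dense sets is nowhere dense, and removing a nowhere dense set from a dense set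
leaves a dense set. -/

theorem Subgroup.eq_top_of_isOpen {G : Type*} [Group G] [TopologicalSpace G]
    [SeparatelyContinuousMul G] [ConnectedSpace G] (H : Subgroup G) (hH : IsOpen (H : Set G)) :
    H = ⊤ :=
  SetLike.coe_injective <| IsClopen.eq_univ ⟨H.isClosed_of_isOpen hH, hH⟩ ⟨1, H.one_mem⟩

theorem Subgroup.isNowhereDense_of_not_dense {G : Type*} [Group G] [TopologicalSpace G]
    [IsTopologicalGroup G] [ConnectedSpace G] (H : Subgroup G) (hH : ¬Dense (H : Set G)) :
    IsNowhereDense (H : Set G) := by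
  rw [IsNowhereDense, ← Set.not_nonempty_iff_eq_empty]
  rintro ⟨x, hx⟩
  have hopen : IsOpen (H.topologicalClosure : Set G) :=
    H.topologicalClosure.isOpen_of_mem_nhds (mem_interior_iff_mem_nhds.1 hx)
  apply hH
  rw [dense_iff_closure_eq, ← Subgroup.topologicalClosure_coe,
    H.topologicalClosure.eq_top_of_isOpen hopen, Subgroup.coe_top]

theorem IsNowhereDense.smul {M α : Type*} [Group M] [MulAction M α] [TopologicalSpace α]
    [ContinuousConstSMul M α] {s : Set α} (hs : IsNowhereDense s) (c : M) :
    IsNowhereDense (c • s) := by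
  rw [IsNowhereDense, closure_smul, interior_smul, hs, Set.smul_set_empty]

theorem isNowhereDense_iUnion {X ι : Type*} [TopologicalSpace X] [Finite ι] {s : ι → Set X}
    (hs : ∀ i, IsNowhereDense (s i)) : IsNowhereDense (⋃ i, s i) := by
  rw [IsNowhereDense, interior_eq_empty_iff_dense_compl, closure_iUnion_of_finite,
    Set.compl_iUnion, ← Set.sInter_range]
  refine (Set.finite_range _).dense_sInter ?_ ?_ <;> rintro _ ⟨i, rfl⟩
  · exact isClosed_closure.isOpen_compl
  · exact interior_eq_empty_iff_dense_compl.1 (hs i)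

theorem Dense.diff_isNowhereDense {X : Type*} [TopologicalSpace X] {s t : Set X} (hs : Dense s)
    (ht : IsNowhereDense t) : Dense (s \ t) :=
  (hs.inter_of_isOpen_right (interior_eq_empty_iff_dense_compl.1 ht)
    isClosed_closure.isOpen_compl).mono fun _ hx => ⟨hx.1, fun hxt => hx.2 (subset_closure hxt)⟩

theorem dense_compl_of_finite_union_cosets_general
    (G : Type*) [Group G] [TopologicalSpace G] [IsTopologicalGroup G] [ConnectedSpace G]
    (Γ : Subgroup G) (hΓ : Dense (Γ : Set G))
    (n : ℕ) (H : Fin n → Subgroup G)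
    (hnd : ∀ i, ¬ Dense ((H i : Set G)))
    (a : Fin n → G) :
    Dense ((Γ : Set G) \ ⋃ i, a i • ((H i : Set G))) :=
  hΓ.diff_isNowhereDense <| isNowhereDense_iUnion fun i =>
    ((H i).isNowhereDense_of_not_dense (hnd i)).smul (a i)

/-- Let `G` be a connected topological group and `Γ` a dense subgroup.
If `H₁, …, Hₙ` are subgroups of `Γ`, none of them dense in `G`, and `X` is a finite union
of cosets `aᵢHᵢ` with `aᵢ ∈ Γ`, then `Γ \ X` is dense in `G`. -/
theorem dense_compl_of_finite_union_cosets
    (G : Type*) [Group G] [TopologicalSpace G] [IsTopologicalGroup G] [ConnectedSpace G]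
    (Γ : Subgroup G) (hΓ : Dense (Γ : Set G))
    (n : ℕ) (H : Fin n → Subgroup G) (hle : ∀ i, H i ≤ Γ)
    (hnd : ∀ i, ¬ Dense ((H i : Set G)))
    (a : Fin n → G) (ha : ∀ i, a i ∈ Γ) :
    Dense ((Γ : Set G) \ ⋃ i, a i • ((H i : Set G))) :=
  dense_compl_of_finite_union_cosets_general G Γ hΓ n H hnd a
end

section
/- Let G be a topological group, X a countable set, and 1 ≤ p < ∞ with p ≠ 2. Let π be a group homomorphism from G to the group of surjective linear isometries of the complex Banach space ℓ_p(X) such that g ↦ π(g)f is norm-continuous for every f ∈ ℓ_p(X). Then there exist an action of G on X by permutations and a map c: G × X → S¹ such that: (1) (π(g)f)(x) = c(g⁻¹, x) f(g⁻¹x) for all g ∈ G, f ∈ ℓ_p(X), x ∈ X; (2) the stabilizer in G of every point of X is an open subgroup; (3) c is continuous (X carrying the discrete topology) and satisfies the cocycle relation c(g₁g₂, x) = c(g₁, g₂x)·c(g₂, x) for all g₁, g₂ ∈ G and x ∈ X. -/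
/-!
For `p ≠ 2` and nonzero `a, b`, the Clarkson defect
`‖a + b‖ ^ p + ‖a - b‖ ^ p - 2 (‖a‖ ^ p + ‖b‖ ^ p)` has the strict sign of `p - 2`, while it
vanishes when `a = 0` or `b = 0`. Summing over coordinates, equality in the Clarkson inequality of
`ℓ^p` characterises disjointly supported pairs, so a linear isometry sends the unit vectors `e x`
to disjointly supported vectors; if it is surjective it is therefore a weighted composition
`f ↦ c • (f ∘ σ)` with `σ` bijective and `‖c‖ = 1` (Lamperti). These data are unique, so along a
representation `g ↦ σ g` is an anti-homomorphism and the weights form a cocycle; the action is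
`φ g = σ g⁻¹`. Finally `π g (e x)` is a unimodular multiple of `e (φ g x)`, and such vectors for
distinct points are at distance at least `1`, so strong continuity makes `g ↦ φ g x` locally
constant and the weights continuous.
-/

open scoped ENNReal Topology

namespace Real

lemma rpow_add_lt_add_rpow {q x y : ℝ} (hq : q < 1) (hx : 0 < x) (hy : 0 < y) :
    (x + y) ^ q < x ^ q + y ^ q := by
  have hxy : 0 < x + y := add_pos hx hy
  have split (z : ℝ) (hz : 0 < z) : z ^ q = z * z ^ (q - 1) := by
    rw [rpow_sub_one hz.ne']
    field_simp
  calc (x + y) ^ q = x * (x + y) ^ (q - 1) + y * (x + y) ^ (q - 1) := by rw [split _ hxy]; ring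
    _ < x * x ^ (q - 1) + y * y ^ (q - 1) := by
      have hq' : q - 1 < 0 := by linarith
      exact add_lt_add (mul_lt_mul_of_pos_left (rpow_lt_rpow_of_neg hx (by linarith) hq') hx)
        (mul_lt_mul_of_pos_left (rpow_lt_rpow_of_neg hy (by linarith) hq') hy)
    _ = x ^ q + y ^ q := by rw [← split x hx, ← split y hy]

lemma add_rpow_lt_rpow_add {q x y : ℝ} (hq : 1 < q) (hx : 0 < x) (hy : 0 < y) :
    x ^ q + y ^ q < (x + y) ^ q := by
  have hxy : 0 < x + y := add_pos hx hy
  have split (z : ℝ) (hz : 0 < z) : z ^ q = z * z ^ (q - 1) := by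
    rw [rpow_sub_one hz.ne']
    field_simp
  calc x ^ q + y ^ q = x * x ^ (q - 1) + y * y ^ (q - 1) := by rw [← split x hx, ← split y hy]
    _ < x * (x + y) ^ (q - 1) + y * (x + y) ^ (q - 1) := by
      have hq' : 0 < q - 1 := by linarith
      exact add_lt_add (mul_lt_mul_of_pos_left (rpow_lt_rpow hx.le (by linarith) hq') hx)
        (mul_lt_mul_of_pos_left (rpow_lt_rpow hy.le (by linarith) hq') hy)
    _ = (x + y) ^ q := by rw [split _ hxy]; ring

lemma rpow_eq_sq_rpow_half {x : ℝ} (hx : 0 ≤ x) (p : ℝ) : x ^ p = (x ^ 2) ^ (p / 2) := by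
  rw [← rpow_natCast_mul hx]
  ring_nf

end Real

lemma norm_add_rpow_add_norm_sub_rpow_eq_of_eq_zero_or {E : Type*} [SeminormedAddCommGroup E]
    {p : ℝ} {a b : E} (hp : 0 < p) (h : a = 0 ∨ b = 0) :
    ‖a + b‖ ^ p + ‖a - b‖ ^ p = 2 * (‖a‖ ^ p + ‖b‖ ^ p) := by
  rcases h with rfl | rfl <;> simp [Real.zero_rpow hp.ne'] <;> ring

section Clarkson

variable {E : Type*} [NormedAddCommGroup E] [InnerProductSpace ℝ E] {p : ℝ} {a b : E}

lemma parallelogram_law_with_norm_half (a b : E) :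
    1 / 2 * ‖a + b‖ ^ 2 + 1 / 2 * ‖a - b‖ ^ 2 = ‖a‖ ^ 2 + ‖b‖ ^ 2 := by
  linarith [parallelogram_law_with_norm ℝ a b]

/- With `q = p / 2`, the parallelogram law `A + B = 2 (u + v)` for the squared norms
`A = ‖a + b‖², B = ‖a - b‖², u = ‖a‖², v = ‖b‖²` reduces both strict inequalities to
midpoint concavity (convexity) and strict subadditivity (superadditivity) of `t ↦ t ^ q`. -/
lemma norm_add_rpow_add_norm_sub_rpow_lt (hp : 0 < p) (hp2 : p < 2) (ha : a ≠ 0) (hb : b ≠ 0) :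
    ‖a + b‖ ^ p + ‖a - b‖ ^ p < 2 * (‖a‖ ^ p + ‖b‖ ^ p) := by
  simp only [Real.rpow_eq_sq_rpow_half (norm_nonneg _) p]
  have hmid := (Real.strictConcaveOn_rpow (by positivity) (by linarith : p / 2 < 1)).concaveOn.2
    (sq_nonneg ‖a + b‖) (sq_nonneg ‖a - b‖) (by norm_num : (0 : ℝ) ≤ 1 / 2)
    (by norm_num : (0 : ℝ) ≤ 1 / 2) (by norm_num)
  simp only [smul_eq_mul, parallelogram_law_with_norm_half] at hmid
  have hsub := Real.rpow_add_lt_add_rpow (by linarith : p / 2 < 1)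
    (pow_pos (norm_pos_iff.2 ha) 2) (pow_pos (norm_pos_iff.2 hb) 2)
  linarith

lemma lt_norm_add_rpow_add_norm_sub_rpow (hp2 : 2 < p) (ha : a ≠ 0) (hb : b ≠ 0) :
    2 * (‖a‖ ^ p + ‖b‖ ^ p) < ‖a + b‖ ^ p + ‖a - b‖ ^ p := by
  simp only [Real.rpow_eq_sq_rpow_half (norm_nonneg _) p]
  have hmid := (strictConvexOn_rpow (by linarith : 1 < p / 2)).convexOn.2
    (sq_nonneg ‖a + b‖) (sq_nonneg ‖a - b‖) (by norm_num : (0 : ℝ) ≤ 1 / 2)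
    (by norm_num : (0 : ℝ) ≤ 1 / 2) (by norm_num)
  simp only [smul_eq_mul, parallelogram_law_with_norm_half] at hmid
  have hsup := Real.add_rpow_lt_rpow_add (by linarith : 1 < p / 2)
    (pow_pos (norm_pos_iff.2 ha) 2) (pow_pos (norm_pos_iff.2 hb) 2)
  linarith

end Clarkson

namespace lp

section Clarkson

variable {X E : Type*} [NormedAddCommGroup E] [InnerProductSpace ℝ E] {p : ℝ≥0∞} [Fact (1 ≤ p)]

theorem norm_add_rpow_add_norm_sub_rpow_eq_iff (hp : p ≠ ∞) (hp2 : p ≠ 2)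
    (f g : lp (fun _ : X => E) p) :
    ‖f + g‖ ^ p.toReal + ‖f - g‖ ^ p.toReal = 2 * (‖f‖ ^ p.toReal + ‖g‖ ^ p.toReal) ↔
      ∀ x, f x = 0 ∨ g x = 0 := by
  have hp0 : 0 < p.toReal := ENNReal.toReal_pos (zero_lt_one.trans_le Fact.out).ne' hp
  have hp2' : p.toReal ≠ 2 := fun h => hp2 (by rw [← ENNReal.ofReal_toReal hp, h]; norm_num)
  have hL : HasSum (fun x => ‖f x + g x‖ ^ p.toReal + ‖f x - g x‖ ^ p.toReal)
      (‖f + g‖ ^ p.toReal + ‖f - g‖ ^ p.toReal) :=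
    (hasSum_norm hp0 (f + g)).add (hasSum_norm hp0 (f - g))
  have hR : HasSum (fun x => 2 * (‖f x‖ ^ p.toReal + ‖g x‖ ^ p.toReal))
      (2 * (‖f‖ ^ p.toReal + ‖g‖ ^ p.toReal)) :=
    ((hasSum_norm hp0 f).add (hasSum_norm hp0 g)).mul_left 2
  constructor
  · intro heq x
    by_contra! hx
    have hsplit (y : X) : (f y = 0 ∨ g y = 0) ∨ (f y ≠ 0 ∧ g y ≠ 0) := by tauto
    rcases hp2'.lt_or_gt with hlt | hgt
    · refine (hasSum_lt (fun y => ?_) (norm_add_rpow_add_norm_sub_rpow_lt hp0 hlt hx.1 hx.2)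
        hL hR).ne heq
      rcases hsplit y with h | h
      · exact (norm_add_rpow_add_norm_sub_rpow_eq_of_eq_zero_or hp0 h).le
      · exact (norm_add_rpow_add_norm_sub_rpow_lt hp0 hlt h.1 h.2).le
    · refine (hasSum_lt (fun y => ?_) (lt_norm_add_rpow_add_norm_sub_rpow hgt hx.1 hx.2)
        hR hL).ne' heq
      rcases hsplit y with h | h
      · exact (norm_add_rpow_add_norm_sub_rpow_eq_of_eq_zero_or hp0 h).ge
      · exact (lt_norm_add_rpow_add_norm_sub_rpow hgt h.1 h.2).le
  · intro h
    refine hL.unique ?_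
    simpa only [norm_add_rpow_add_norm_sub_rpow_eq_of_eq_zero_or hp0 (h _)] using hR

end Clarkson

variable {X Y : Type*} {p : ℝ≥0∞}

section Single

variable [Fact (1 ≤ p)]

theorem norm_le_dist_single_single {E : Type*} [NormedAddCommGroup E] [DecidableEq X]
    {i j : X} (hij : i ≠ j) (a b : E) :
    ‖a‖ ≤ dist (lp.single (E := fun _ => E) p i a) (lp.single p j b) := by
  have h := norm_apply_le_norm (zero_lt_one.trans_le Fact.out).ne'
    (lp.single (E := fun _ => E) p i a - lp.single p j b) i
  rwa [lp.coeFn_sub, Pi.sub_apply, lp.single_apply_self,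
    lp.single_apply_ne (E := fun _ => E) p j b hij, sub_zero, ← dist_eq_norm] at h

theorem isLocallyConstant_of_continuous_single {T E : Type*} [TopologicalSpace T]
    [NormedAddCommGroup E] [DecidableEq X] {i : T → X} {a : T → E} (ha : ∀ t, a t ≠ 0)
    (h : Continuous fun t => lp.single (E := fun _ => E) p (i t) (a t)) :
    IsLocallyConstant i := by
  refine (IsLocallyConstant.iff_eventually_eq i).2 fun t₀ => ?_
  have hball := Metric.ball_mem_nhds (lp.single (E := fun _ => E) p (i t₀) (a t₀))
    (norm_pos_iff.2 (ha t₀))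
  filter_upwards [h.continuousAt.eventually hball] with t ht
  by_contra hne
  exact (norm_le_dist_single_single (p := p) (Ne.symm hne) (a t₀) (a t)).not_gt
    (by rwa [dist_comm])

theorem continuous_of_continuous_single {T E : Type*} [TopologicalSpace T]
    [NormedAddCommGroup E] [DecidableEq X] {i : T → X} {a : T → E} (hi : IsLocallyConstant i)
    (h : Continuous fun t => lp.single (E := fun _ => E) p (i t) (a t)) : Continuous a := by
  refine continuous_iff_continuousAt.2 fun t₀ => ?_
  have hev : (fun t => lp.single (E := fun _ => E) p (i t) (a t) (i t₀)) =ᶠ[𝓝 t₀] a := by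
    filter_upwards [(IsLocallyConstant.iff_eventually_eq i).1 hi t₀] with t ht
    rw [← ht, lp.single_apply_self]
  exact (((lipschitzWith_one_eval p (i t₀)).continuous.comp h).continuousAt).congr hev

end Single

section WeightedComp

variable {𝕜 Z : Type*} [RCLike 𝕜]

def IsWeightedComp (T : lp (fun _ : X => 𝕜) p → lp (fun _ : Y => 𝕜) p) (σ : Y → X) (c : Y → 𝕜) :
    Prop :=
  ∀ f y, T f y = c y * f (σ y)

theorem isWeightedComp_id : IsWeightedComp (id : lp (fun _ : X => 𝕜) p → _) id 1 := by
  simp [IsWeightedComp]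

namespace IsWeightedComp

variable {S : lp (fun _ : Y => 𝕜) p → lp (fun _ : Z => 𝕜) p}
  {T : lp (fun _ : X => 𝕜) p → lp (fun _ : Y => 𝕜) p} {σ σ' : Y → X} {c c' : Y → 𝕜}

theorem comp {τ : Z → Y} {d : Z → 𝕜} (hS : IsWeightedComp S τ d) (hT : IsWeightedComp T σ c) :
    IsWeightedComp (S ∘ T) (σ ∘ τ) (fun z => d z * c (τ z)) := by
  intro f z
  simp only [Function.comp_apply, hS (T f) z, hT f (τ z), mul_assoc]

theorem unique (h : IsWeightedComp T σ c) (h' : IsWeightedComp T σ' c')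
    (hc : ∀ y, c y ≠ 0) : σ = σ' ∧ c = c' := by
  classical
  have key (y : Y) : c y = c' y * lp.single (E := fun _ => 𝕜) p (σ y) 1 (σ' y) := by
    simpa [lp.single_apply_self] using (h (lp.single p (σ y) 1) y).symm.trans (h' _ y)
  have hσ (y : Y) : σ y = σ' y := by
    by_contra hne
    exact hc y (by rw [key, lp.single_apply_ne _ _ _ (Ne.symm hne), mul_zero])
  refine ⟨funext hσ, funext fun y => ?_⟩
  rw [key, hσ, lp.single_apply_self, mul_one]

theorem apply_single [DecidableEq X] [DecidableEq Y] {σ : Y ≃ X} (h : IsWeightedComp T σ c)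
    (x : X) (a : 𝕜) : T (lp.single p x a) = lp.single p (σ.symm x) (c (σ.symm x) * a) := by
  ext y
  rw [h, lp.single_apply, lp.single_apply]
  simp only [Pi.single_apply, Equiv.eq_symm_apply]
  split_ifs with hy
  · rw [← hy, σ.symm_apply_apply]
  · rw [mul_zero]

end IsWeightedComp

variable [Fact (1 ≤ p)]

theorem hasSum_apply [DecidableEq X] (hp : p ≠ ∞)
    (T : lp (fun _ : X => 𝕜) p →L[𝕜] lp (fun _ : Y => 𝕜) p) (f : lp (fun _ : X => 𝕜) p) (y : Y) :
    HasSum (fun x => f x * T (lp.single p x 1) y) (T f y) := by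
  have hx (x : X) : lp.single (E := fun _ => 𝕜) p x (f x) = f x • lp.single p x 1 := by
    rw [← lp.single_smul, smul_eq_mul, mul_one]
  have h := ((lp.hasSum_single hp f).mapL T).mapL (evalCLM 𝕜 (fun _ : Y => 𝕜) p y)
  simp only [hx, map_smul] at h
  exact h

theorem _root_.LinearIsometryEquiv.exists_isWeightedComp_lp (hp : p ≠ ∞)
    (hp2 : p ≠ 2) (T : lp (fun _ : X => 𝕜) p ≃ₗᵢ[𝕜] lp (fun _ : Y => 𝕜) p) :
    ∃ (σ : Y → X) (c : Y → 𝕜), (∀ y, c y ≠ 0) ∧ IsWeightedComp T σ c := by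
  classical
  set e : X → lp (fun _ : X => 𝕜) p := fun x => lp.single p x 1
  have hsum (f : lp (fun _ : X => 𝕜) p) (y : Y) : HasSum (fun x => f x * T (e x) y) (T f y) :=
    hasSum_apply hp T.toContinuousLinearEquiv.toContinuousLinearMap f y
  have hdisj (x x' : X) (hne : x ≠ x') (y : Y) : T (e x) y = 0 ∨ T (e x') y = 0 := by
    refine (norm_add_rpow_add_norm_sub_rpow_eq_iff hp hp2 _ _).1 ?_ y
    rw [← map_add, ← map_sub, T.norm_map, T.norm_map, T.norm_map, T.norm_map]
    refine (norm_add_rpow_add_norm_sub_rpow_eq_iff hp hp2 _ _).2 fun z => ?_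
    by_cases hz : z = x
    · subst hz
      exact Or.inr (lp.single_apply_ne _ _ _ hne)
    · exact Or.inl (lp.single_apply_ne _ _ _ hz)
  have hex (y : Y) : ∃ x, T (e x) y ≠ 0 := by
    by_contra! h
    have := hsum (T.symm (lp.single p y 1)) y
    simp only [h, mul_zero, T.apply_symm_apply] at this
    exact one_ne_zero ((lp.single_apply_self (E := fun _ => 𝕜) p y 1).symm.trans
      (this.unique hasSum_zero))
  choose s hs using hex
  refine ⟨s, fun y => T (e (s y)) y, hs, fun f y => ?_⟩
  have hvan (x : X) (hx : x ≠ s y) : f x * T (e x) y = 0 := by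
    rcases hdisj x (s y) hx y with h | h
    · rw [h, mul_zero]
    · exact absurd h (hs y)
  rw [(hsum f y).unique (hasSum_single (s y) hvan), mul_comm]

theorem _root_.LinearIsometryEquiv.exists_perm_isWeightedComp_lp (hp : p ≠ ∞) (hp2 : p ≠ 2)
    (T : lp (fun _ : X => 𝕜) p ≃ₗᵢ[𝕜] lp (fun _ : Y => 𝕜) p) :
    ∃ (σ : Y ≃ X) (c : Y → 𝕜), (∀ y, ‖c y‖ = 1) ∧ IsWeightedComp T σ c := by
  classical
  obtain ⟨s, c, hc, hT⟩ := T.exists_isWeightedComp_lp hp hp2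
  obtain ⟨t, d, hd, hT'⟩ := T.symm.exists_isWeightedComp_lp hp hp2
  have hts : s ∘ t = id := (T.symm_comp_self ▸ hT'.comp hT |>.unique isWeightedComp_id
    fun x => mul_ne_zero (hd x) (hc (t x))).1
  have hst : t ∘ s = id := (T.self_comp_symm ▸ hT.comp hT' |>.unique isWeightedComp_id
    fun y => mul_ne_zero (hc y) (hd (s y))).1
  let σ : Y ≃ X := ⟨s, t, congrFun hst, congrFun hts⟩
  have hTσ : IsWeightedComp T σ c := hT
  refine ⟨σ, c, fun y => ?_, hTσ⟩
  have h := congrArg norm (hTσ.apply_single (σ y) (1 : 𝕜))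
  have hp0 : 0 < p := zero_lt_one.trans_le Fact.out
  rwa [T.norm_map, σ.symm_apply_apply, lp.norm_single hp0, lp.norm_single hp0, mul_one, norm_one,
    eq_comm] at h

end WeightedComp

end lp

namespace lp.IsWeightedComp

variable {𝕜 X G : Type*} [RCLike 𝕜] {p : ℝ≥0∞} [Fact (1 ≤ p)] [Group G]
  {π : G →* (lp (fun _ : X => 𝕜) p ≃ₗᵢ[𝕜] lp (fun _ : X => 𝕜) p)}
  {σ : G → Equiv.Perm X} {w : G → X → 𝕜}

theorem map_mul (hπ : ∀ g, IsWeightedComp (π g) (σ g) (w g)) (g h : G) :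
    IsWeightedComp (π (g * h)) (σ h ∘ σ g) fun y => w g y * w h (σ g y) := by
  rw [_root_.map_mul, LinearIsometryEquiv.coe_mul]
  exact (hπ g).comp (hπ h)

theorem map_one : IsWeightedComp (π 1) id 1 := by
  rw [_root_.map_one, LinearIsometryEquiv.coe_one]
  exact isWeightedComp_id

variable (hw : ∀ g y, w g y ≠ 0) (hπ : ∀ g, IsWeightedComp (π g) (σ g) (w g))
include hw hπ

theorem perm_mul_apply (g h : G) (y : X) : σ (g * h) y = σ h (σ g y) :=
  congrFun ((hπ (g * h)).unique (map_mul hπ g h) (hw _)).1 y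

theorem weight_mul_apply (g h : G) (y : X) : w (g * h) y = w g y * w h (σ g y) :=
  congrFun ((hπ (g * h)).unique (map_mul hπ g h) (hw _)).2 y

theorem perm_one_apply (y : X) : σ 1 y = y :=
  congrFun ((hπ 1).unique map_one (hw 1)).1 y

theorem weight_one_apply (y : X) : w 1 y = 1 :=
  congrFun ((hπ 1).unique map_one (hw 1)).2 y

theorem apply_single_one [DecidableEq X] (g : G) (x : X) :
    π g (lp.single p x 1) = lp.single p (σ g⁻¹ x) (w g⁻¹ x)⁻¹ := by
  have hσ : (σ g).symm x = σ g⁻¹ x := (Equiv.symm_apply_eq _).2 <| by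
    rw [← perm_mul_apply hw hπ, inv_mul_cancel, perm_one_apply hw hπ]
  have hw' : w g (σ g⁻¹ x) = (w g⁻¹ x)⁻¹ := eq_inv_of_mul_eq_one_right <| by
    rw [← weight_mul_apply hw hπ, inv_mul_cancel, weight_one_apply hw hπ]
  rw [(hπ g).apply_single, hσ, hw', mul_one]

variable [TopologicalSpace G] (hcont : ∀ f, Continuous fun g => π g f)
include hcont

theorem isLocallyConstant_perm_inv_apply (x : X) : IsLocallyConstant fun g => σ g⁻¹ x := by
  classical
  refine isLocallyConstant_of_continuous_single (p := p) (fun g => inv_ne_zero (hw g⁻¹ x)) ?_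
  simpa only [apply_single_one hw hπ] using hcont (lp.single p x 1)

theorem continuous_weight_inv_apply (x : X) : Continuous fun g => w g⁻¹ x := by
  classical
  have h := continuous_of_continuous_single (isLocallyConstant_perm_inv_apply hw hπ hcont x)
    (by simpa only [apply_single_one hw hπ] using hcont (lp.single p x 1))
  exact (h.inv₀ fun g => inv_ne_zero (hw g⁻¹ x)).congr fun g => inv_inv _

end lp.IsWeightedComp

theorem orthRep_eq_twisted_permutation_general
    (G : Type*) [Group G] [TopologicalSpace G]
    (X : Type*)
    (p : ℝ) (hp2 : p ≠ 2) [Fact (1 ≤ ENNReal.ofReal p)]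
    (π : G →* (lp (fun _ : X => ℂ) (ENNReal.ofReal p) ≃ₗᵢ[ℂ]
      lp (fun _ : X => ℂ) (ENNReal.ofReal p)))
    (hcont : ∀ f : lp (fun _ : X => ℂ) (ENNReal.ofReal p), Continuous fun g => π g f) :
    ∃ (φ : G →* Equiv.Perm X) (c : G → X → ℂ),
      (∀ (g : G) (x : X), ‖c g x‖ = 1) ∧
      (∀ (g : G) (f : lp (fun _ : X => ℂ) (ENNReal.ofReal p)) (x : X),
        (π g f) x = c g⁻¹ x * f (φ g⁻¹ x)) ∧
      (∀ x : X, IsOpen {g : G | φ g x = x}) ∧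
      (∀ x : X, Continuous fun g => c g x) ∧
      (∀ (g₁ g₂ : G) (x : X), c (g₁ * g₂) x = c g₁ (φ g₂ x) * c g₂ x) := by
  have hp2' : ENNReal.ofReal p ≠ 2 := fun h => hp2 (ENNReal.ofReal_eq_ofNat.1 h)
  choose σ w hw hπ using fun g => (π g).exists_perm_isWeightedComp_lp ENNReal.ofReal_ne_top hp2'
  have hw0 (g : G) (y : X) : w g y ≠ 0 := norm_ne_zero_iff.1 (hw g y ▸ one_ne_zero)
  refine ⟨MonoidHom.mk' (fun g => σ g⁻¹) fun a b => ?_, fun g x => w g⁻¹ x,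
    fun g x => hw g⁻¹ x, fun g f x => ?_, fun x => ?_,
    lp.IsWeightedComp.continuous_weight_inv_apply hw0 hπ hcont, fun g₁ g₂ x => ?_⟩
  · ext y
    simp [mul_inv_rev, lp.IsWeightedComp.perm_mul_apply hw0 hπ]
  · simpa using hπ g f x
  · exact (lp.IsWeightedComp.isLocallyConstant_perm_inv_apply hw0 hπ hcont x).isOpen_fiber x
  · simp [mul_inv_rev, lp.IsWeightedComp.weight_mul_apply hw0 hπ, mul_comm]

/-- Every strongly continuous representation of a topological group
`G` by surjective linear isometries of `ℓ_p(X)`, `p ≠ 2`, comes from a continuous action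
of `G` on `X` and a continuous `S¹`-valued cocycle via
`(π(g) f)(x) = c(g⁻¹, x) f(g⁻¹ x)`. -/
theorem orthRep_eq_twisted_permutation
    (G : Type*) [Group G] [TopologicalSpace G] [IsTopologicalGroup G]
    (X : Type*) [Countable X]
    (p : ℝ) (hp1 : 1 ≤ p) (hp2 : p ≠ 2) [Fact (1 ≤ ENNReal.ofReal p)]
    (π : G →* (lp (fun _ : X => ℂ) (ENNReal.ofReal p) ≃ₗᵢ[ℂ]
      lp (fun _ : X => ℂ) (ENNReal.ofReal p)))
    (hcont : ∀ f : lp (fun _ : X => ℂ) (ENNReal.ofReal p), Continuous fun g => π g f) :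
    ∃ (φ : G →* Equiv.Perm X) (c : G → X → ℂ),
      (∀ (g : G) (x : X), ‖c g x‖ = 1) ∧
      (∀ (g : G) (f : lp (fun _ : X => ℂ) (ENNReal.ofReal p)) (x : X),
        (π g f) x = c g⁻¹ x * f (φ g⁻¹ x)) ∧
      (∀ x : X, IsOpen {g : G | φ g x = x}) ∧
      (∀ x : X, Continuous fun g => c g x) ∧
      (∀ (g₁ g₂ : G) (x : X), c (g₁ * g₂) x = c g₁ (φ g₂ x) * c g₂ x) :=
  orthRep_eq_twisted_permutation_general G X p hp2 π hcont
end
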